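/- arXiv:1708.05578 — 4 statements merged into one kernel-verified Lean document; each statement's English description precedes it below -/
import Mathlib

section
/- Let h and g be analytic functions on the unit disk 𝔻 with h(0) = 0 and g(0) = 0, and suppose the harmonic mapping f(z) = h(z) + conj(g(z)) satisfies |f(z)| < 1 for all z ∈ 𝔻. Then |h(z)| + |g(z)| ≤ 1 for all z ∈ 𝔻 with |z| ≤ tanh(π/4). -/
/-!
Choose `c` with `‖c‖ = 1` such that `c h(z)` and `conj c g(z)` point in the same direction, so that
`‖h z‖ + ‖g z‖ = ‖F z‖` for the holomorphic function `F = c h + conj c g`. Since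
`Re F = Re (c f)`, `F` maps the disk into the strip `|Re w| < 1`, `F 0 = 0`, and
`w ↦ tan (π w / 4)` maps that strip into the disk. Schwarz's lemma then gives
`‖tan (π F(z) / 4)‖ ≤ ‖z‖ ≤ tanh (π / 4)`, which for `π F(z) / 2 = x + i y` reads
`cosh y ≤ cosh (π / 2) cos x`. Comparing with `cosh √((π / 2)² - x²)`, a function of `x` that
dominates `cosh (π / 2) cos x` by a monotonicity argument, forces `x² + y² ≤ (π / 2)²`,
i.e. `‖F z‖ ≤ 1`.
-/

open Metric ComplexConjugate
open scoped Real

namespace Real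

lemma convexOn_sinh : ConvexOn ℝ (Set.Ici 0) sinh := by
  refine MonotoneOn.convexOn_of_deriv (convex_Ici 0) continuous_sinh.continuousOn
    differentiable_sinh.differentiableOn ?_
  rw [deriv_sinh, interior_Ici]
  intro x hx y hy hxy
  exact cosh_le_cosh.mpr (by rwa [abs_of_pos hx, abs_of_pos hy])

lemma sinh_div_le_sinh_div {s t : ℝ} (hs : 0 < s) (hst : s ≤ t) : sinh s / s ≤ sinh t / t := by
  simpa using convexOn_sinh.secant_mono (a := 0) Set.self_mem_Ici hs.le (hs.le.trans hst)
    hs.ne' (hs.trans_le hst).ne' hst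

lemma cosh_pi_div_two_mul_cos_le {x : ℝ} (hx : |x| ≤ π / 2) :
    cosh (π / 2) * cos x ≤ cosh √((π / 2) ^ 2 - x ^ 2) := by
  wlog hx0 : 0 ≤ x generalizing x
  · simpa using this (x := -x) (by simpa using hx) (by linarith)
  set P := π / 2 with hP
  have hP0 : 0 < P := by positivity
  set ψ : ℝ → ℝ := fun t ↦ cosh √(P ^ 2 - t ^ 2) - cosh P * cos t
  suffices MonotoneOn ψ (Set.Icc 0 P) by
    have := this (Set.left_mem_Icc.2 hP0.le) ⟨hx0, (le_abs_self x).trans hx⟩ hx0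
    simpa [ψ, sqrt_sq hP0.le] using this
  refine monotoneOn_of_hasDerivWithinAt_nonneg (convex_Icc 0 P) (by fun_prop)
    (f' := fun t ↦ cosh P * sin t - sinh √(P ^ 2 - t ^ 2) * t / √(P ^ 2 - t ^ 2)) ?_ ?_
  · intro t ht
    rw [interior_Icc] at ht
    have hpos : 0 < P ^ 2 - t ^ 2 := by nlinarith [ht.1, ht.2]
    refine ((((hasDerivAt_pow 2 t).const_sub (P ^ 2)).sqrt hpos.ne').cosh.sub
      ((hasDerivAt_cos t).const_mul (cosh P))).hasDerivWithinAt.congr_deriv ?_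
    field_simp
    ring
  · intro t ht
    rw [interior_Icc] at ht
    set s := √(P ^ 2 - t ^ 2)
    have hs : 0 < s := sqrt_pos.2 (by nlinarith [ht.1, ht.2])
    have hsP : s ≤ P := by
      rw [← sqrt_sq hP0.le]
      exact sqrt_le_sqrt (by nlinarith)
    have jordan : t / P ≤ sin t := by
      simpa [hP, div_eq_inv_mul, mul_comm] using mul_le_sin ht.1.le ht.2.le
    rw [sub_nonneg]
    calc sinh s * t / s = sinh s / s * t := by ring
      _ ≤ sinh P / P * t := mul_le_mul_of_nonneg_right (sinh_div_le_sinh_div hs hsP) ht.1.le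
      _ = sinh P * (t / P) := by ring
      _ ≤ cosh P * (t / P) :=
        mul_le_mul_of_nonneg_right (sinh_lt_cosh P).le (div_nonneg ht.1.le hP0.le)
      _ ≤ cosh P * sin t := by gcongr

lemma sq_add_sq_le_of_cosh_le_cosh_pi_div_two_mul_cos {x y : ℝ} (hx : |x| ≤ π / 2)
    (h : cosh y ≤ cosh (π / 2) * cos x) : x ^ 2 + y ^ 2 ≤ (π / 2) ^ 2 := by
  have hy : |y| ≤ √((π / 2) ^ 2 - x ^ 2) := by
    simpa [abs_of_nonneg (sqrt_nonneg _)] using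
      cosh_le_cosh.1 (h.trans (cosh_pi_div_two_mul_cos_le hx))
  have hx2 : x ^ 2 ≤ (π / 2) ^ 2 := sq_le_sq' (abs_le.1 hx).1 (abs_le.1 hx).2
  nlinarith [sq_abs y, sq_sqrt (sub_nonneg.2 hx2), abs_nonneg y]

end Real

namespace Complex

lemma normSq_cos (z : ℂ) : normSq (cos z) = Real.cos z.re ^ 2 + Real.sinh z.im ^ 2 := by
  rw [cos_eq, normSq_apply]
  simp [← ofReal_cos, ← ofReal_sin, ← ofReal_cosh, ← ofReal_sinh]
  nlinarith [Real.cosh_sq z.im, Real.sin_sq_add_cos_sq z.re]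

lemma normSq_sin (z : ℂ) : normSq (sin z) = Real.sin z.re ^ 2 + Real.sinh z.im ^ 2 := by
  rw [sin_eq, normSq_apply]
  simp [← ofReal_cos, ← ofReal_sin, ← ofReal_cosh, ← ofReal_sinh]
  nlinarith [Real.cosh_sq z.im, Real.sin_sq_add_cos_sq z.re]

lemma cos_ne_zero_of_cos_two_mul_re_pos {z : ℂ} (h : 0 < Real.cos (2 * z.re)) : cos z ≠ 0 := by
  rw [Real.cos_two_mul] at h
  rw [← normSq_pos, normSq_cos]
  exact add_pos_of_pos_of_nonneg (by linarith) (sq_nonneg _)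

lemma norm_tan_lt_one_of_cos_two_mul_re_pos {z : ℂ} (h : 0 < Real.cos (2 * z.re)) :
    ‖tan z‖ < 1 := by
  have hc : 0 < ‖cos z‖ := norm_pos_iff.2 (cos_ne_zero_of_cos_two_mul_re_pos h)
  rw [tan_eq_sin_div_cos, norm_div, div_lt_one hc, ← sq_lt_sq₀ (norm_nonneg _) hc.le,
    Complex.sq_norm, Complex.sq_norm, normSq_sin, normSq_cos]
  rw [Real.cos_two_mul] at h
  nlinarith [Real.sin_sq_add_cos_sq z.re]

lemma norm_tan_le_tanh_iff {z : ℂ} (hz : cos z ≠ 0) {a : ℝ} (ha : 0 ≤ a) :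
    ‖tan z‖ ≤ Real.tanh a ↔ Real.cosh (2 * z.im) ≤ Real.cosh (2 * a) * Real.cos (2 * z.re) := by
  have hc : 0 < ‖cos z‖ := norm_pos_iff.2 hz
  have hcosh : 0 < Real.cosh a := Real.cosh_pos a
  have hsinh : 0 ≤ Real.sinh a := Real.sinh_nonneg_iff.2 ha
  rw [tan_eq_sin_div_cos, norm_div, div_le_iff₀ hc, Real.tanh_eq_sinh_div_cosh,
    ← sq_le_sq₀ (norm_nonneg _) (by positivity),
    mul_pow, Complex.sq_norm, Complex.sq_norm, normSq_sin, normSq_cos, div_pow,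
    div_mul_eq_mul_div, le_div_iff₀ (by positivity), Real.cosh_two_mul, Real.cosh_two_mul,
    Real.cos_two_mul]
  have := Real.sin_sq_add_cos_sq z.re
  have := Real.cosh_sq a
  have := Real.cosh_sq z.im
  constructor <;> intro h <;> nlinarith

lemma cos_two_mul_re_pi_div_four_mul_pos {ζ : ℂ} (h : |ζ.re| < 1) :
    0 < Real.cos (2 * (((π / 4 : ℝ) : ℂ) * ζ).re) := by
  have := abs_lt.1 h
  apply Real.cos_pos_of_mem_Ioo
  rw [re_ofReal_mul, ← mul_assoc, Set.mem_Ioo]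
  constructor <;> nlinarith [Real.pi_pos]

lemma norm_le_one_of_norm_tan_pi_div_four_mul_le {ζ : ℂ} (hre : |ζ.re| < 1)
    (h : ‖tan (((π / 4 : ℝ) : ℂ) * ζ)‖ ≤ Real.tanh (π / 4)) : ‖ζ‖ ≤ 1 := by
  rw [norm_tan_le_tanh_iff (cos_ne_zero_of_cos_two_mul_re_pos
    (cos_two_mul_re_pi_div_four_mul_pos hre)) (by positivity)] at h
  have hπ : 2 * (π / 4) = π / 2 := by ring
  simp only [re_ofReal_mul, im_ofReal_mul, ← mul_assoc, hπ] at h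
  have hπ0 : 0 < π / 2 := by positivity
  have hre' := abs_lt.1 hre
  have hsq := Real.sq_add_sq_le_of_cosh_le_cosh_pi_div_two_mul_cos
    (abs_le.2 ⟨by nlinarith, by nlinarith⟩) h
  have hnormSq : (π / 2) ^ 2 * normSq ζ ≤ (π / 2) ^ 2 * 1 := by
    rw [normSq_apply]
    linarith
  rw [← sq_le_one_iff₀ (norm_nonneg _), Complex.sq_norm]
  exact le_of_mul_le_mul_left hnormSq (by positivity)

lemma norm_le_one_of_mapsTo_strip {F : ℂ → ℂ} (hF : DifferentiableOn ℂ F (ball 0 1))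
    (hF0 : F 0 = 0) (hstrip : Set.MapsTo F (ball 0 1) {w | |w.re| < 1}) {z : ℂ}
    (hz : ‖z‖ ≤ Real.tanh (π / 4)) : ‖F z‖ ≤ 1 := by
  have hcos : ∀ w ∈ ball (0 : ℂ) 1, 0 < Real.cos (2 * (((π / 4 : ℝ) : ℂ) * F w).re) :=
    fun w hw ↦ cos_two_mul_re_pi_div_four_mul_pos (hstrip hw)
  have hG : DifferentiableOn ℂ (fun w ↦ tan (((π / 4 : ℝ) : ℂ) * F w)) (ball 0 1) := by
    intro w hw
    have htan : DifferentiableAt ℂ tan (((π / 4 : ℝ) : ℂ) * F w) :=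
      differentiableAt_tan.2 (cos_ne_zero_of_cos_two_mul_re_pos (hcos w hw))
    exact (htan.comp w (((hF w hw).differentiableAt (isOpen_ball.mem_nhds hw)).const_mul
      ((π / 4 : ℝ) : ℂ))).differentiableWithinAt
  have hmaps : Set.MapsTo (fun w ↦ tan (((π / 4 : ℝ) : ℂ) * F w)) (ball 0 1) (closedBall 0 1) :=
    fun w hw ↦ mem_closedBall_zero_iff.2 (norm_tan_lt_one_of_cos_two_mul_re_pos (hcos w hw)).le
  have hz1 : ‖z‖ < 1 := hz.trans_lt (Real.tanh_lt_one _)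
  exact norm_le_one_of_norm_tan_pi_div_four_mul_le (hstrip (mem_ball_zero_iff.2 hz1))
    ((norm_le_norm_of_mapsTo_ball hG hmaps (by simp [hF0]) hz1).trans hz)

lemma exists_norm_eq_one_norm_mul_add_conj_mul (a b : ℂ) :
    ∃ c : ℂ, ‖c‖ = 1 ∧ ‖c * a + conj c * b‖ = ‖a‖ + ‖b‖ := by
  set θ : ℝ := (arg b - arg a) / 2
  refine ⟨exp (θ * I), norm_exp_ofReal_mul_I θ, ?_⟩
  have hrot : ∀ (x : ℂ) (φ : ℝ), arg x + φ = (arg a + arg b) / 2 →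
      exp (φ * I) * x = ‖x‖ * exp (((arg a + arg b) / 2 : ℝ) * I) := by
    intro x φ hφ
    conv_lhs => rw [← norm_mul_exp_arg_mul_I x]
    rw [mul_left_comm, ← exp_add, ← hφ]
    push_cast
    ring_nf
  rw [← exp_conj, map_mul, conj_ofReal, conj_I, mul_neg, ← neg_mul, ← ofReal_neg,
    hrot a θ (by ring), hrot b (-θ) (by ring), ← add_mul, norm_mul, norm_exp_ofReal_mul_I, mul_one,
    ← ofReal_add, norm_real, Real.norm_of_nonneg (by positivity)]

lemma re_mul_add_conj_mul (c a b : ℂ) : (c * a + conj c * b).re = (c * (a + conj b)).re := by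
  simp only [add_re, add_im, mul_re, conj_re, conj_im]
  ring

end Complex

open Metric in
/-- If `f = h + conj g` is a harmonic mapping of the unit disk with `h(0) = g(0) = 0`
and `|f| < 1` on the disk, then `|h(z)| + |g(z)| ≤ 1` for `|z| ≤ tanh(π/4)`. -/
theorem harmonic_bohr_tanh_radius
    (h g : ℂ → ℂ)
    (hh : AnalyticOnNhd ℂ h (ball (0 : ℂ) 1))
    (hg : AnalyticOnNhd ℂ g (ball (0 : ℂ) 1))
    (hh0 : h 0 = 0) (hg0 : g 0 = 0)
    (hbound : ∀ z : ℂ, ‖z‖ < 1 → ‖h z + (starRingEnd ℂ) (g z)‖ < 1) :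
    ∀ z : ℂ, ‖z‖ ≤ Real.tanh (Real.pi / 4) → ‖h z‖ + ‖g z‖ ≤ 1 := by
  intro z hz
  obtain ⟨c, hc, hcz⟩ := Complex.exists_norm_eq_one_norm_mul_add_conj_mul (h z) (g z)
  rw [← hcz]
  refine Complex.norm_le_one_of_mapsTo_strip (F := fun w ↦ c * h w + conj c * g w)
    ((hh.differentiableOn.const_mul c).add (hg.differentiableOn.const_mul _))
    (by simp [hh0, hg0]) (fun w hw ↦ ?_) hz
  rw [Set.mem_ofPred, Complex.re_mul_add_conj_mul]
  calc |(c * (h w + conj (g w))).re| ≤ ‖c * (h w + conj (g w))‖ := Complex.abs_re_le_norm _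
    _ < 1 := by
      rw [norm_mul, hc, one_mul]
      exact hbound w (mem_ball_zero_iff.1 hw)
end

section
/- Let h(z) = ∑_{k=0}^∞ a_k z^k and g(z) = ∑_{k=0}^∞ b_k z^k be analytic functions on the unit disk 𝔻 satisfying |h(z)| + |g(z)| ≤ 1 for all z ∈ 𝔻. Then √(|a_0|² + |b_0|²) + ∑_{k=1}^∞ √(|a_k|² + |b_k|²) · r^k ≤ 1 for all r with 0 ≤ r ≤ 1/3. -/
/-!
For every unimodular `σ`, `F_σ = h + σ g` is bounded by `1` on the disk, so Wiener's inequality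
`|c_k| ≤ 1 - |c_0|²` (`k ≥ 1`) applies to its coefficients `a_k + σ b_k`. Wiener's inequality is
Schwarz–Pick at the origin, applied to the function `w ↦ ∑ c_{jk} wʲ`, which is bounded by `1`
because it is the average of `f` over the rotations `z ↦ ζᵐ z` by the `k`-th roots of unity,
taken at a `k`-th root of `w`. Choosing `σ = ±ε` with `conj a_0 · b_0 · ε` purely imaginary makes
`|a_0 ± ε b_0|² = |a_0|² + |b_0|²`, and the parallelogram law then gives
`√(|a_k|² + |b_k|²) ≤ 1 - (|a_0|² + |b_0|²)`. With `s = √(|a_0|² + |b_0|²)` the Bohr sum is at most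
`s + (1 - s²) r / (1 - r) ≤ s + (1 - s²) / 2 ≤ 1` for `r ≤ 1/3`.
-/

open Complex ComplexConjugate Metric Set Filter Finset Topology

theorem IsPrimitiveRoot.sum_pow_pow_eq_ite {R : Type*} [CommRing R] [IsDomain R] {ζ : R} {k : ℕ}
    (hζ : IsPrimitiveRoot ζ k) (n : ℕ) :
    ∑ m ∈ range k, (ζ ^ n) ^ m = if k ∣ n then (k : R) else 0 := by
  split_ifs with hdvd
  · simp [(hζ.pow_eq_one_iff_dvd n).mpr hdvd]
  · have hne : ζ ^ n ≠ 1 := fun h => hdvd ((hζ.pow_eq_one_iff_dvd n).mp h)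
    have hpow : (ζ ^ n) ^ k = 1 := by rw [← pow_mul, mul_comm, pow_mul, hζ.pow_eq_one, one_pow]
    refine eq_zero_of_ne_zero_of_mul_left_eq_zero (sub_ne_zero_of_ne hne) ?_
    rw [mul_geom_sum, hpow, sub_self]

theorem exists_norm_eq_one_re_mul_eq_zero (w : ℂ) : ∃ ε : ℂ, ‖ε‖ = 1 ∧ (w * ε).re = 0 := by
  refine ⟨I * exp (↑(-w.arg) * I), by rw [norm_mul, norm_exp_ofReal_mul_I, norm_I, one_mul], ?_⟩
  have : w * (I * exp (↑(-w.arg) * I)) = ‖w‖ * I := by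
    nth_rw 1 [← norm_mul_exp_arg_mul_I w]
    have hexp : exp (w.arg * I) * exp (↑(-w.arg) * I) = 1 := by
      rw [← exp_add, ofReal_neg, neg_mul, add_neg_cancel, exp_zero]
    linear_combination (‖w‖ * I : ℂ) * hexp
  rw [this, mul_re, ofReal_re, ofReal_im, I_re, I_im]
  ring

theorem norm_add_mul_sq_of_re_eq_zero {x y σ : ℂ} (hσ : ‖σ‖ = 1) (h : (conj x * y * σ).re = 0) :
    ‖x + σ * y‖ ^ 2 = ‖x‖ ^ 2 + ‖y‖ ^ 2 := by
  have hre : (x * conj (σ * y)).re = 0 := by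
    rw [← h, ← conj_re]
    simp only [map_mul, conj_conj]
    ring_nf
  rw [Complex.sq_norm, Complex.sq_norm, Complex.sq_norm, normSq_add, hre, ← Complex.sq_norm (σ * y),
    norm_mul, hσ, one_mul, Complex.sq_norm, mul_zero, add_zero]

theorem add_tsum_mul_pow_succ_le_one {s r : ℝ} {d : ℕ → ℝ} (hd0 : ∀ k, 0 ≤ d k)
    (hd : ∀ k, d k ≤ 1 - s ^ 2) (hr0 : 0 ≤ r) (hr : r ≤ 1 / 3) :
    s + ∑' k, d k * r ^ (k + 1) ≤ 1 := by
  have hr1 : r < 1 := by linarith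
  have hgeom : HasSum (fun k : ℕ => (1 - s ^ 2) * r ^ (k + 1)) ((1 - s ^ 2) * (r / (1 - r))) := by
    simp_rw [pow_succ' r, ← mul_assoc _ r]
    have := (hasSum_geometric_of_lt_one hr0 hr1).mul_left ((1 - s ^ 2) * r)
    simpa [div_eq_mul_inv, mul_assoc] using this
  have hle : ∀ k, d k * r ^ (k + 1) ≤ (1 - s ^ 2) * r ^ (k + 1) := fun k =>
    mul_le_mul_of_nonneg_right (hd k) (pow_nonneg hr0 _)
  have htsum := Summable.tsum_le_tsum hle
    (hgeom.summable.of_nonneg_of_le (fun k => mul_nonneg (hd0 k) (pow_nonneg hr0 _)) hle)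
    hgeom.summable
  rw [hgeom.tsum_eq] at htsum
  have hratio : r / (1 - r) ≤ 1 / 2 := by rw [div_le_iff₀ (by linarith)]; linarith
  have hs : 0 ≤ 1 - s ^ 2 := (hd0 0).trans (hd 0)
  nlinarith [mul_le_mul_of_nonneg_left hratio hs, sq_nonneg (1 - s)]

theorem norm_sub_le_norm_one_sub_conj_mul {c w : ℂ} (hc : ‖c‖ ≤ 1) (hw : ‖w‖ ≤ 1) :
    ‖w - c‖ ≤ ‖1 - conj c * w‖ := by
  have hidentity : normSq (1 - conj c * w) - normSq (w - c) = (1 - normSq c) * (1 - normSq w) := by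
    simp only [normSq_apply, sub_re, sub_im, mul_re, mul_im, one_re, one_im, conj_re, conj_im]
    ring
  rw [← sq_le_sq₀ (norm_nonneg _) (norm_nonneg _), Complex.sq_norm, Complex.sq_norm]
  rw [← sq_le_one_iff₀ (norm_nonneg _), Complex.sq_norm] at hc hw
  nlinarith

noncomputable def blaschkeFactor (c w : ℂ) : ℂ := (w - c) / (1 - conj c * w)

section blaschkeFactor

variable {c w : ℂ}

theorem one_sub_conj_mul_ne_zero (hc : ‖c‖ < 1) (hw : ‖w‖ ≤ 1) : 1 - conj c * w ≠ 0 := by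
  refine sub_ne_zero.mpr fun h => ?_
  have : ‖conj c * w‖ < 1 := by
    rw [norm_mul, RCLike.norm_conj]
    exact (mul_le_of_le_one_right (norm_nonneg c) hw).trans_lt hc
  rw [← h, norm_one] at this
  exact this.false

theorem blaschkeFactor_self : blaschkeFactor c c = 0 := by simp [blaschkeFactor]

theorem norm_blaschkeFactor_le_one (hc : ‖c‖ ≤ 1) (hw : ‖w‖ ≤ 1) : ‖blaschkeFactor c w‖ ≤ 1 := by
  rw [blaschkeFactor, norm_div]
  exact div_le_one_of_le₀ (norm_sub_le_norm_one_sub_conj_mul hc hw) (norm_nonneg _)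

theorem hasDerivAt_blaschkeFactor (hc : ‖c‖ < 1) :
    HasDerivAt (blaschkeFactor c) (1 - (‖c‖ : ℂ) ^ 2)⁻¹ c := by
  have hden := one_sub_conj_mul_ne_zero hc hc.le
  have hconj : conj c * c = (‖c‖ : ℂ) ^ 2 := by
    rw [mul_comm, mul_conj, normSq_eq_norm_sq, ofReal_pow]
  refine (((hasDerivAt_id c).sub_const c).div ((hasDerivAt_const c 1).sub
    ((hasDerivAt_id c).const_mul (conj c))) hden).congr_deriv ?_
  simp only [Pi.sub_apply, id, sub_self, zero_mul, sub_zero, one_mul, hconj]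
  rw [hconj] at hden
  field_simp

theorem differentiableAt_blaschkeFactor (hc : ‖c‖ < 1) (hw : ‖w‖ ≤ 1) :
    DifferentiableAt ℂ (blaschkeFactor c) w :=
  ((differentiableAt_id.sub_const c).div ((differentiableAt_const 1).sub
    (differentiableAt_id.const_mul (conj c))) (one_sub_conj_mul_ne_zero hc hw))

end blaschkeFactor

theorem norm_deriv_zero_le_one_sub_sq_of_norm_lt {f : ℂ → ℂ} (hd : DifferentiableOn ℂ f (ball 0 1))
    (hmaps : MapsTo f (ball 0 1) (closedBall 0 1)) (hf0 : ‖f 0‖ < 1) :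
    ‖deriv f 0‖ ≤ 1 - ‖f 0‖ ^ 2 := by
  have hmaps' : ∀ z ∈ ball (0 : ℂ) 1, ‖f z‖ ≤ 1 := fun z hz => by simpa using hmaps hz
  have hφd : DifferentiableOn ℂ (blaschkeFactor (f 0) ∘ f) (ball 0 1) := fun z hz =>
    ((differentiableAt_blaschkeFactor hf0 (hmaps' z hz)).comp z
      (hd.differentiableAt (isOpen_ball.mem_nhds hz))).differentiableWithinAt
  have hφmaps : MapsTo (blaschkeFactor (f 0) ∘ f) (ball 0 1)
      (closedBall ((blaschkeFactor (f 0) ∘ f) 0) 1) := fun z hz => by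
    simpa [blaschkeFactor_self] using norm_blaschkeFactor_le_one hf0.le (hmaps' z hz)
  have hschwarz := Complex.norm_deriv_le_one_of_mapsTo_ball hφd hφmaps one_pos
  have hpos : 0 < 1 - ‖f 0‖ ^ 2 := by nlinarith [norm_nonneg (f 0)]
  rw [((hasDerivAt_blaschkeFactor hf0).comp 0
    (hd.differentiableAt (isOpen_ball.mem_nhds (mem_ball_self one_pos))).hasDerivAt).deriv,
    norm_mul, norm_inv, ← ofReal_pow, ← ofReal_one, ← ofReal_sub, norm_real,
    Real.norm_of_nonneg hpos.le, inv_mul_le_iff₀ hpos, mul_one] at hschwarz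
  exact hschwarz

theorem norm_deriv_zero_le_one_sub_sq {f : ℂ → ℂ} (hd : DifferentiableOn ℂ f (ball 0 1))
    (hmaps : MapsTo f (ball 0 1) (closedBall 0 1)) : ‖deriv f 0‖ ≤ 1 - ‖f 0‖ ^ 2 := by
  have hf0 : ‖f 0‖ ≤ 1 := by simpa using hmaps (mem_ball_self one_pos)
  rcases hf0.lt_or_eq with hlt | heq
  · exact norm_deriv_zero_le_one_sub_sq_of_norm_lt hd hmaps hlt
  · have hmax : IsMaxOn (norm ∘ f) (ball 0 1) 0 := fun z hz => by
      simpa [heq] using hmaps hz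
    have hconst : f =ᶠ[𝓝 0] fun _ => f 0 :=
      Filter.eventuallyEq_of_mem (isOpen_ball.mem_nhds (mem_ball_self one_pos))
        (Complex.eqOn_of_isPreconnected_of_isMaxOn_norm (convex_ball 0 1).isPreconnected
          isOpen_ball hd (mem_ball_self one_pos) hmax)
    rw [hconst.deriv_eq, deriv_const, heq]
    norm_num

def HasCoeffsOnUnitDisk (f : ℂ → ℂ) (c : ℕ → ℂ) : Prop :=
  ∀ z : ℂ, ‖z‖ < 1 → HasSum (fun n => c n * z ^ n) (f z)

namespace HasCoeffsOnUnitDisk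

variable {f g : ℂ → ℂ} {c d : ℕ → ℂ}

theorem apply_zero (hf : HasCoeffsOnUnitDisk f c) : f 0 = c 0 :=
  (hf 0 (by simp)).unique <| by
    simpa using hasSum_single (f := fun n => c n * 0 ^ n) 0 fun n hn => by simp [zero_pow hn]

theorem add_const_mul (hf : HasCoeffsOnUnitDisk f c) (hg : HasCoeffsOnUnitDisk g d) (σ : ℂ) :
    HasCoeffsOnUnitDisk (fun z => f z + σ * g z) (fun n => c n + σ * d n) := fun z hz => by
  simpa only [add_mul, mul_assoc] using (hf z hz).add ((hg z hz).mul_left σ)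

theorem hasFPowerSeriesOnBall (hf : HasCoeffsOnUnitDisk f c) :
    HasFPowerSeriesOnBall f (FormalMultilinearSeries.ofScalars ℂ c) 0 1 where
  r_le := by
    refine ENNReal.le_of_forall_nnreal_lt fun ρ hρ => ?_
    have hρ1 : ‖((ρ : ℝ) : ℂ)‖ < 1 := by simpa using hρ
    refine FormalMultilinearSeries.le_radius_of_tendsto _ (l := 0) ?_
    simpa [FormalMultilinearSeries.ofScalars_norm] using (hf _ hρ1).summable.tendsto_atTop_zero.norm
  r_pos := one_pos
  hasSum {y} hy := by
    rw [← ENNReal.coe_one, Metric.eball_coe, NNReal.coe_one, mem_ball_zero_iff] at hy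
    simpa [FormalMultilinearSeries.ofScalars_apply_eq, mul_comm] using hf y hy

theorem differentiableOn (hf : HasCoeffsOnUnitDisk f c) : DifferentiableOn ℂ f (ball 0 1) := by
  have := hf.hasFPowerSeriesOnBall.differentiableOn
  rwa [← ENNReal.coe_one, Metric.eball_coe, NNReal.coe_one] at this

theorem deriv_zero (hf : HasCoeffsOnUnitDisk f c) : deriv f 0 = c 1 := by
  simp [hf.hasFPowerSeriesOnBall.hasFPowerSeriesAt.deriv]

theorem hasSum_sparse {k : ℕ} (hf : HasCoeffsOnUnitDisk f c) (hk : 0 < k) {ζ : ℂ}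
    (hζ : IsPrimitiveRoot ζ k) {z : ℂ} (hz : ‖z‖ < 1) :
    HasSum (fun j => c (j * k) * (z ^ k) ^ j) ((∑ m ∈ range k, f (ζ ^ m * z)) / k) := by
  have hrot : ∀ m ∈ range k, HasSum (fun n => c n * (ζ ^ m * z) ^ n) (f (ζ ^ m * z)) := fun m _ =>
    hf _ (by rwa [norm_mul, norm_pow, hζ.norm'_eq_one hk.ne', one_pow, one_mul])
  have hterm : ∀ n, (∑ m ∈ range k, c n * (ζ ^ m * z) ^ n) / k =
      if k ∣ n then c n * z ^ n else 0 := fun n => by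
    have : ∑ m ∈ range k, c n * (ζ ^ m * z) ^ n = (∑ m ∈ range k, (ζ ^ n) ^ m) * (c n * z ^ n) := by
      rw [sum_mul]
      exact sum_congr rfl fun m _ => by ring
    rw [this, hζ.sum_pow_pow_eq_ite]
    have hk' : (k : ℂ) ≠ 0 := by exact_mod_cast hk.ne'
    split_ifs
    · field_simp
    · simp
  have hfilter := (hasSum_sum hrot).div_const (k : ℂ)
  simp only [hterm] at hfilter
  rw [← (mul_left_injective₀ hk.ne').hasSum_iff fun n hn => ?_] at hfilter
  · simpa [Function.comp_def, pow_mul'] using hfilter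
  · rw [if_neg]
    rintro ⟨j, rfl⟩
    exact hn ⟨j, mul_comm j k⟩

theorem exists_sparse {k : ℕ} {M : ℝ} (hf : HasCoeffsOnUnitDisk f c)
    (hb : ∀ z : ℂ, ‖z‖ < 1 → ‖f z‖ ≤ M) (hk : 0 < k) :
    ∃ G : ℂ → ℂ, HasCoeffsOnUnitDisk G (fun j => c (j * k)) ∧ ∀ w : ℂ, ‖w‖ < 1 → ‖G w‖ ≤ M := by
  have hζ := Complex.isPrimitiveRoot_exp k hk.ne'
  set ζ := exp (2 * Real.pi * I / k)
  choose root hroot using fun w : ℂ => IsAlgClosed.exists_pow_nat_eq w hk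
  have hroot_lt : ∀ w : ℂ, ‖w‖ < 1 → ‖root w‖ < 1 := fun w hw => by
    rw [← hroot w, norm_pow] at hw
    exact (pow_lt_one_iff_of_nonneg (norm_nonneg _) hk.ne').mp hw
  refine ⟨fun w => (∑ m ∈ range k, f (ζ ^ m * root w)) / k, fun w hw => ?_, fun w hw => ?_⟩
  · simpa [hroot] using hf.hasSum_sparse hk hζ (hroot_lt w hw)
  · have hkpos : (0 : ℝ) < k := by exact_mod_cast hk
    rw [norm_div, norm_natCast, div_le_iff₀ hkpos]
    calc ‖∑ m ∈ range k, f (ζ ^ m * root w)‖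
        ≤ ∑ m ∈ range k, ‖f (ζ ^ m * root w)‖ := norm_sum_le _ _
      _ ≤ ∑ _m ∈ range k, M := sum_le_sum fun m _ => hb _ <| by
          rw [norm_mul, norm_pow, hζ.norm'_eq_one hk.ne', one_pow, one_mul]
          exact hroot_lt w hw
      _ = M * k := by simp [mul_comm]

theorem norm_coeff_le_one_sub_sq (hf : HasCoeffsOnUnitDisk f c)
    (hb : ∀ z : ℂ, ‖z‖ < 1 → ‖f z‖ ≤ 1) {k : ℕ} (hk : 0 < k) : ‖c k‖ ≤ 1 - ‖c 0‖ ^ 2 := by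
  obtain ⟨G, hG, hGb⟩ := hf.exists_sparse hb hk
  have := norm_deriv_zero_le_one_sub_sq hG.differentiableOn fun w hw => by
    simpa using hGb w (by simpa using hw)
  rwa [hG.deriv_zero, hG.apply_zero, one_mul, zero_mul] at this

theorem sqrt_norm_sq_add_norm_sq_le_one_sub (hf : HasCoeffsOnUnitDisk f c)
    (hg : HasCoeffsOnUnitDisk g d) (hb : ∀ z : ℂ, ‖z‖ < 1 → ‖f z‖ + ‖g z‖ ≤ 1) {k : ℕ}
    (hk : 0 < k) :
    √(‖c k‖ ^ 2 + ‖d k‖ ^ 2) ≤ 1 - (‖c 0‖ ^ 2 + ‖d 0‖ ^ 2) := by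
  have hrot : ∀ σ : ℂ, ‖σ‖ = 1 → (conj (c 0) * d 0 * σ).re = 0 →
      ‖c k + σ * d k‖ ≤ 1 - (‖c 0‖ ^ 2 + ‖d 0‖ ^ 2) := fun σ hσ hre => by
    have hbσ : ∀ z : ℂ, ‖z‖ < 1 → ‖f z + σ * g z‖ ≤ 1 := fun z hz =>
      (norm_add_le _ _).trans (by rw [norm_mul, hσ, one_mul]; exact hb z hz)
    have := (hf.add_const_mul hg σ).norm_coeff_le_one_sub_sq hbσ hk
    rwa [norm_add_mul_sq_of_re_eq_zero hσ hre] at this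
  obtain ⟨ε, hε, hre⟩ := exists_norm_eq_one_re_mul_eq_zero (conj (c 0) * d 0)
  have hplus := hrot ε hε hre
  have hminus := hrot (-ε) (by rw [norm_neg, hε]) (by rw [mul_neg, neg_re, hre, neg_zero])
  rw [neg_mul, ← sub_eq_add_neg] at hminus
  have hpar := parallelogram_law_with_norm ℂ (c k) (ε * d k)
  rw [norm_mul, hε, one_mul] at hpar
  have hnonneg : 0 ≤ 1 - (‖c 0‖ ^ 2 + ‖d 0‖ ^ 2) := (norm_nonneg _).trans hplus
  refine Real.sqrt_le_iff.mpr ⟨hnonneg, ?_⟩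
  nlinarith [pow_le_pow_left₀ (norm_nonneg _) hplus 2, pow_le_pow_left₀ (norm_nonneg _) hminus 2]

end HasCoeffsOnUnitDisk

/-- Proposition 2 of Kayumov–Ponnusamy: if `h, g` are analytic on the unit disk with
`|h| + |g| ≤ 1`, then `√(|a₀|² + |b₀|²) + ∑_{k≥1} √(|aₖ|² + |bₖ|²) rᵏ ≤ 1` for
`r ≤ 1/3`. -/
theorem bohr_pair_l2_inequality
    (a b : ℕ → ℂ) (h g : ℂ → ℂ)
    (hh : ∀ z : ℂ, ‖z‖ < 1 → HasSum (fun k : ℕ => a k * z ^ k) (h z))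
    (hg : ∀ z : ℂ, ‖z‖ < 1 → HasSum (fun k : ℕ => b k * z ^ k) (g z))
    (hbound : ∀ z : ℂ, ‖z‖ < 1 → ‖h z‖ + ‖g z‖ ≤ 1) :
    ∀ r : ℝ, 0 ≤ r → r ≤ 1 / 3 →
      Real.sqrt (‖a 0‖ ^ 2 + ‖b 0‖ ^ 2) +
        (∑' k : ℕ, Real.sqrt (‖a (k + 1)‖ ^ 2 + ‖b (k + 1)‖ ^ 2) * r ^ (k + 1)) ≤ 1 := by
  intro r hr0 hr
  have hcoeff : ∀ k : ℕ,
      √(‖a (k + 1)‖ ^ 2 + ‖b (k + 1)‖ ^ 2) ≤ 1 - √(‖a 0‖ ^ 2 + ‖b 0‖ ^ 2) ^ 2 := fun k => by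
    rw [Real.sq_sqrt (by positivity)]
    exact HasCoeffsOnUnitDisk.sqrt_norm_sq_add_norm_sq_le_one_sub hh hg hbound k.succ_pos
  exact add_tsum_mul_pow_succ_le_one (fun k => Real.sqrt_nonneg _) hcoeff hr0 hr
end

section
/- Let h(z) = ∑_{k=1}^∞ a_k z^k and g(z) = ∑_{k=1}^∞ b_k z^k be analytic on the unit disk 𝔻 with h(0) = g(0) = 0, and suppose the harmonic mapping f(z) = h(z) + conj(g(z)) satisfies |f(z)| ≤ 1 for all z ∈ 𝔻. Then for every real p ≥ 2, ∑_{k=1}^∞ (|a_k|^p + |b_k|^p)^{1/p} · r^k ≤ 1 for all r with 0 ≤ r ≤ 1/√2. -/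
/-!
On the circle `|z| = ρ < 1` the values of `f = h + conj g` form a continuous function on
`ℝ / 2πℤ` of modulus at most `1` whose Fourier coefficients are `a_k ρ^k` at `k ≥ 1` and
`conj (b_k) ρ^k` at `-k`. Parseval's identity gives `∑ (|a_k|² + |b_k|²) ρ^{2k} ≤ 1`, hence
`∑ (|a_k|² + |b_k|²) ≤ 1` as `ρ → 1`. Since `(x^p + y^p)^{1/p} ≤ (x² + y²)^{1/2}` for
`p ≥ 2`, Cauchy–Schwarz bounds the Bohr sum by
`(∑ (|a_k|² + |b_k|²))^{1/2} (∑_{k ≥ 1} r^{2k})^{1/2}`, and the last factor is at most `1`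
exactly when `r² ≤ 1/2`.
-/

open Complex MeasureTheory Finset AddCircle
open scoped ComplexConjugate InnerProductSpace Real

lemma rpow_add_rpow_rpow_one_div_le_sqrt {x y p : ℝ} (hx : 0 ≤ x) (hy : 0 ≤ y)
    (hp : 2 ≤ p) : (x ^ p + y ^ p) ^ (1 / p) ≤ √(x ^ 2 + y ^ 2) := by
  lift x to NNReal using hx
  lift y to NNReal using hy
  rw [Real.sqrt_eq_rpow, ← Real.rpow_two, ← Real.rpow_two]
  exact_mod_cast NNReal.rpow_add_rpow_le x y two_pos hp

lemma sum_pow_succ_le_one {x : ℝ} (hx₀ : 0 ≤ x) (hx : x ≤ 1 / 2) (s : Finset ℕ) :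
    ∑ k ∈ s, x ^ (k + 1) ≤ 1 := by
  have hx₁ : x < 1 := by linarith
  calc ∑ k ∈ s, x ^ (k + 1) = x * ∑ k ∈ s, x ^ k := by
        rw [mul_sum]; simp only [pow_succ']
    _ ≤ x * (1 - x)⁻¹ := by
      gcongr
      rw [← tsum_geometric_of_lt_one hx₀ hx₁]
      exact (summable_geometric_of_lt_one hx₀ hx₁).sum_le_tsum s fun k _ => by positivity
    _ ≤ 1 := by rw [← div_eq_mul_inv, div_le_one (by linarith)]; linarith

lemma sum_succ_add_neg_succ_le {f : ℤ → ℝ} {A : ℝ} (hf : ∀ t : Finset ℤ, ∑ n ∈ t, f n ≤ A)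
    (s : Finset ℕ) : ∑ k ∈ s, (f (k + 1) + f (-(k + 1))) ≤ A := by
  have hdisj :
      Disjoint (s.image fun k : ℕ => (k + 1 : ℤ)) (s.image fun k : ℕ => -(k + 1 : ℤ)) := by
    simp only [disjoint_left, mem_image]
    rintro _ ⟨k, -, rfl⟩ ⟨l, -, h⟩
    omega
  calc ∑ k ∈ s, (f (k + 1) + f (-(k + 1)))
      = ∑ n ∈ s.image (fun k : ℕ => (k + 1 : ℤ)) ∪ s.image (fun k : ℕ => -(k + 1 : ℤ)),
          f n := by
        rw [sum_union hdisj, sum_image (by intro _ _ _ _ h; simpa using h),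
          sum_image (by intro _ _ _ _ h; simpa using h), sum_add_distrib]
    _ ≤ A := hf _

section Fourier

variable {T : ℝ} [Fact (0 < T)]

lemma fourierCoeff_eq_inner (F : C(AddCircle T, ℂ)) (n : ℤ) :
    fourierCoeff F n = ⟪fourierLp 2 n, ContinuousMap.toLp 2 haarAddCircle ℂ F⟫_ℂ := by
  rw [← fourierCoeff_toLp, ← fourierBasis_repr, HilbertBasis.repr_apply_apply, coe_fourierBasis]

lemma HasSum.fourierCoeff {ι : Type*} {u : ι → C(AddCircle T, ℂ)} {F : C(AddCircle T, ℂ)}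
    (hu : HasSum u F) (n : ℤ) :
    HasSum (fun i => fourierCoeff (u i) n) (fourierCoeff F n) := by
  simp only [fourierCoeff_eq_inner]
  exact (innerSL ℂ _).hasSum ((ContinuousMap.toLp 2 haarAddCircle ℂ).hasSum hu)

lemma sum_sq_fourierCoeff_le {F : C(AddCircle T, ℂ)} {C : ℝ} (hF : ∀ t, ‖F t‖ ≤ C)
    (s : Finset ℤ) : ∑ n ∈ s, ‖fourierCoeff F n‖ ^ 2 ≤ C ^ 2 := by
  have hpars := hasSum_sq_fourierCoeff (ContinuousMap.toLp (E := ℂ) 2 haarAddCircle ℂ F)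
  simp only [fourierCoeff_toLp] at hpars
  refine (sum_le_hasSum s (fun _ _ => by positivity) hpars).trans ?_
  rw [integral_congr_ae ((ContinuousMap.coeFn_toLp (p := 2) (𝕜 := ℂ) haarAddCircle F).mono
    fun t ht => congrArg (‖·‖ ^ 2) ht)]
  calc ∫ t, ‖F t‖ ^ 2 ∂haarAddCircle ≤ ∫ _, C ^ 2 ∂haarAddCircle :=
        integral_mono_of_nonneg (.of_forall fun _ => by positivity) (integrable_const _)
          (.of_forall fun t => pow_le_pow_left₀ (norm_nonneg _) (hF t) 2)
    _ = C ^ 2 := by simp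

end Fourier

local instance : Fact (0 < 2 * π) := ⟨Real.two_pi_pos⟩

/-- `a_k z^k + conj (b_k z^k)` at `z = ρ e^{iθ}`, as a function of `θ ∈ ℝ / 2πℤ`. -/
noncomputable def circleTerm (a b : ℕ → ℂ) (ρ : ℝ) (k : ℕ) : C(AddCircle (2 * π), ℂ) :=
  (a k * ρ ^ k) • fourier k + (conj (b k) * ρ ^ k) • fourier (-k)

section circleTerm

variable (a b : ℕ → ℂ) (ρ : ℝ)

lemma circleTerm_coe_apply (k : ℕ) (x : ℝ) :
    circleTerm a b ρ k x = a k * circleMap 0 ρ x ^ k + conj (b k * circleMap 0 ρ x ^ k) := by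
  have hexp (n : ℤ) : fourier n (x : AddCircle (2 * π)) = exp (x * I) ^ n := by
    rw [fourier_coe_apply, ← exp_int_mul]
    congr 1
    push_cast
    field_simp
  simp [circleTerm, circleMap, hexp, mul_pow, ← exp_conj, exp_neg]
  ring

lemma norm_circleTerm_le (hρ : 0 ≤ ρ) (k : ℕ) :
    ‖circleTerm a b ρ k‖ ≤ (‖a k‖ + ‖b k‖) * ρ ^ k := by
  refine (norm_add_le _ _).trans_eq ?_
  simp [norm_smul, fourier_norm, abs_of_nonneg hρ, add_mul]

lemma fourierCoeff_circleTerm (k : ℕ) (n : ℤ) :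
    fourierCoeff (circleTerm a b ρ k) n
      = a k * ρ ^ k * (Pi.single (k : ℤ) 1 : ℤ → ℂ) n
        + conj (b k) * ρ ^ k * (Pi.single (-(k : ℤ)) 1 : ℤ → ℂ) n := by
  have hint (m : ℤ) (c : ℂ) :
      Integrable (c • ⇑(fourier (T := 2 * π) m)) haarAddCircle :=
    (map_continuous (c • fourier m)).integrable_of_hasCompactSupport
      (HasCompactSupport.of_compactSpace _)
  rw [circleTerm, ContinuousMap.coe_add, ContinuousMap.coe_smul, ContinuousMap.coe_smul,
    fourierCoeff.add (hint _ _) (hint _ _), Pi.add_apply, fourierCoeff.const_smul,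
    fourierCoeff.const_smul, fourierCoeff_fourier, fourierCoeff_fourier, smul_eq_mul, smul_eq_mul]

lemma fourierCoeff_circleTerm_succ (j k : ℕ) :
    fourierCoeff (circleTerm a b ρ j) (k + 1)
      = if j = k + 1 then a (k + 1) * ρ ^ (k + 1) else 0 := by
  rw [fourierCoeff_circleTerm, Pi.single_apply, Pi.single_apply,
    if_neg (show (k + 1 : ℤ) ≠ -j by omega), mul_zero, add_zero]
  rcases eq_or_ne j (k + 1) with rfl | hj
  · simp
  · rw [if_neg (by omega), if_neg hj, mul_zero]

lemma fourierCoeff_circleTerm_neg_succ (j k : ℕ) :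
    fourierCoeff (circleTerm a b ρ j) (-(k + 1))
      = if j = k + 1 then conj (b (k + 1)) * ρ ^ (k + 1) else 0 := by
  rw [fourierCoeff_circleTerm, Pi.single_apply, Pi.single_apply,
    if_neg (show -(k + 1 : ℤ) ≠ j by omega), mul_zero, zero_add]
  rcases eq_or_ne j (k + 1) with rfl | hj
  · simp
  · rw [if_neg (by omega), if_neg hj, mul_zero]

end circleTerm

section BoundedHarmonic

variable {a b : ℕ → ℂ} {h g : ℂ → ℂ}

lemma sum_sq_norm_coeff_mul_sq_pow_le
    (hh : ∀ z : ℂ, ‖z‖ < 1 → HasSum (fun k : ℕ => a k * z ^ k) (h z))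
    (hg : ∀ z : ℂ, ‖z‖ < 1 → HasSum (fun k : ℕ => b k * z ^ k) (g z))
    (hbound : ∀ z : ℂ, ‖z‖ < 1 → ‖h z + conj (g z)‖ ≤ 1)
    {ρ : ℝ} (hρ₀ : 0 ≤ ρ) (hρ₁ : ρ < 1) (s : Finset ℕ) :
    ∑ k ∈ s, (‖a (k + 1)‖ ^ 2 + ‖b (k + 1)‖ ^ 2) * (ρ ^ (k + 1)) ^ 2 ≤ 1 := by
  have hρ : ‖(ρ : ℂ)‖ < 1 := by rwa [norm_real, Real.norm_of_nonneg hρ₀]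
  have hsummable (c : ℕ → ℂ) (hc : Summable fun k => c k * (ρ : ℂ) ^ k) :
      Summable fun k => ‖c k‖ * ρ ^ k := by
    simpa [abs_of_nonneg hρ₀] using summable_norm_iff.mpr hc
  have hF := Summable.hasSum <| Summable.of_norm_bounded
    (((hsummable a (hh ρ hρ).summable).add (hsummable b (hg ρ hρ).summable)).congr
      fun k => (add_mul _ _ _).symm) (norm_circleTerm_le a b ρ hρ₀)
  set F := ∑' k, circleTerm a b ρ k
  have hF_le (t : AddCircle (2 * π)) : ‖F t‖ ≤ 1 := by
    obtain ⟨x, rfl⟩ := QuotientAddGroup.mk_surjective t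
    have hz : ‖circleMap 0 ρ x‖ < 1 := by rwa [norm_circleMap_zero, abs_of_nonneg hρ₀]
    have hsum := (hh _ hz).add (hasSum_conj'.mpr (hg _ hz))
    simp only [← circleTerm_coe_apply] at hsum
    rw [show F x = _ from
      ((ContinuousMap.evalCLM ℂ (x : AddCircle (2 * π))).hasSum hF).unique hsum]
    exact hbound _ hz
  have hpos (k : ℕ) : fourierCoeff F (k + 1) = a (k + 1) * ρ ^ (k + 1) :=
    (hF.fourierCoeff _).unique <| by
      simpa only [fourierCoeff_circleTerm_succ] using hasSum_ite_eq (k + 1) _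
  have hneg (k : ℕ) : fourierCoeff F (-(k + 1)) = conj (b (k + 1)) * ρ ^ (k + 1) :=
    (hF.fourierCoeff _).unique <| by
      simpa only [fourierCoeff_circleTerm_neg_succ] using hasSum_ite_eq (k + 1) _
  refine le_of_eq_of_le ?_
    ((sum_succ_add_neg_succ_le (sum_sq_fourierCoeff_le hF_le) s).trans_eq (one_pow 2))
  refine sum_congr rfl fun k _ => ?_
  rw [hpos, hneg]
  simp [abs_of_nonneg hρ₀]
  ring

lemma sum_sq_norm_coeff_le
    (hh : ∀ z : ℂ, ‖z‖ < 1 → HasSum (fun k : ℕ => a k * z ^ k) (h z))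
    (hg : ∀ z : ℂ, ‖z‖ < 1 → HasSum (fun k : ℕ => b k * z ^ k) (g z))
    (hbound : ∀ z : ℂ, ‖z‖ < 1 → ‖h z + conj (g z)‖ ≤ 1) (s : Finset ℕ) :
    ∑ k ∈ s, (‖a (k + 1)‖ ^ 2 + ‖b (k + 1)‖ ^ 2) ≤ 1 := by
  have hcont : Continuous fun ρ : ℝ =>
      ∑ k ∈ s, (‖a (k + 1)‖ ^ 2 + ‖b (k + 1)‖ ^ 2) * (ρ ^ (k + 1)) ^ 2 := by
    fun_prop
  refine le_of_tendsto
    (by simpa using (hcont.tendsto 1).mono_left (nhdsWithin_le_nhds (s := Set.Iio 1))) ?_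
  filter_upwards [Ioo_mem_nhdsLT zero_lt_one] with ρ hρ
  exact sum_sq_norm_coeff_mul_sq_pow_le hh hg hbound hρ.1.le hρ.2 s

end BoundedHarmonic

theorem harmonic_p_bohr_radius_ge_two_general
    (a b : ℕ → ℂ) (h g : ℂ → ℂ)
    (hh : ∀ z : ℂ, ‖z‖ < 1 → HasSum (fun k : ℕ => a k * z ^ k) (h z))
    (hg : ∀ z : ℂ, ‖z‖ < 1 → HasSum (fun k : ℕ => b k * z ^ k) (g z))
    (hbound : ∀ z : ℂ, ‖z‖ < 1 → ‖h z + (starRingEnd ℂ) (g z)‖ ≤ 1) :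
    ∀ p : ℝ, 2 ≤ p → ∀ r : ℝ, 0 ≤ r → r ≤ 1 / Real.sqrt 2 →
      (∑' k : ℕ, (‖a (k + 1)‖ ^ p + ‖b (k + 1)‖ ^ p) ^ (1 / p) * r ^ (k + 1)) ≤ 1 := by
  intro p hp r hr₀ hr
  have hr_sq : r ^ 2 ≤ 1 / 2 := by simpa [div_pow] using pow_le_pow_left₀ hr₀ hr 2
  refine tsum_le_of_sum_le' zero_le_one fun s => ?_
  calc ∑ k ∈ s, (‖a (k + 1)‖ ^ p + ‖b (k + 1)‖ ^ p) ^ (1 / p) * r ^ (k + 1)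
      ≤ ∑ k ∈ s, √(‖a (k + 1)‖ ^ 2 + ‖b (k + 1)‖ ^ 2) * √((r ^ 2) ^ (k + 1)) := by
        gcongr with k
        · exact rpow_add_rpow_rpow_one_div_le_sqrt (norm_nonneg _) (norm_nonneg _) hp
        · rw [← pow_mul, mul_comm, pow_mul, Real.sqrt_sq (by positivity)]
    _ ≤ √(∑ k ∈ s, (‖a (k + 1)‖ ^ 2 + ‖b (k + 1)‖ ^ 2))
          * √(∑ k ∈ s, (r ^ 2) ^ (k + 1)) :=
        Real.sum_sqrt_mul_sqrt_le s (fun _ => by positivity) (fun _ => by positivity)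
    _ ≤ 1 := mul_le_one₀ (Real.sqrt_le_one.mpr (sum_sq_norm_coeff_le hh hg hbound s))
        (Real.sqrt_nonneg _)
        (Real.sqrt_le_one.mpr (sum_pow_succ_le_one (by positivity) hr_sq s))

/-- `p`-Bohr radius for bounded harmonic mappings vanishing at the origin:
for `p ≥ 2` the `p`-Bohr radius is `1/√2`. -/
theorem harmonic_p_bohr_radius_ge_two
    (a b : ℕ → ℂ) (h g : ℂ → ℂ)
    (hh : ∀ z : ℂ, ‖z‖ < 1 → HasSum (fun k : ℕ => a k * z ^ k) (h z))
    (hg : ∀ z : ℂ, ‖z‖ < 1 → HasSum (fun k : ℕ => b k * z ^ k) (g z))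
    (ha0 : a 0 = 0) (hb0 : b 0 = 0)
    (hbound : ∀ z : ℂ, ‖z‖ < 1 → ‖h z + (starRingEnd ℂ) (g z)‖ ≤ 1) :
    ∀ p : ℝ, 2 ≤ p → ∀ r : ℝ, 0 ≤ r → r ≤ 1 / Real.sqrt 2 →
      (∑' k : ℕ, (‖a (k + 1)‖ ^ p + ‖b (k + 1)‖ ^ p) ^ (1 / p) * r ^ (k + 1)) ≤ 1 :=
  harmonic_p_bohr_radius_ge_two_general a b h g hh hg hbound
end

section
/- Let f(z) = ∑_{k=0}^∞ a_{2k+1} z^{2k+1} + ∑_{k=0}^∞ conj(b_{2k+1} z^{2k+1}) be an odd harmonic function on the unit disk 𝔻 (i.e., f = h + conj(g) with h(z) = ∑_{k=0}^∞ a_{2k+1} z^{2k+1} and g(z) = ∑_{k=0}^∞ b_{2k+1} z^{2k+1} analytic on 𝔻) satisfying |f(z)| < 1 for all z ∈ 𝔻. Then: (i) for every real p with 1 ≤ p ≤ 2 and every r with 0 ≤ r ≤ ρ_p := √(√(4^{(2/p) − 2} + 1) − 2^{(2/p) − 2}), one has ∑_{k=0}^∞ (|a_{2k+1}|^p + |b_{2k+1}|^p)^{1/p}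 · r^{2k+1} ≤ 2^{(1/p) − 1/2} · r/√(1 − r⁴) ≤ 1; and (ii) for every real p ≥ 2 and every r with 0 ≤ r ≤ √((√5 − 1)/2), one has ∑_{k=0}^∞ (|a_{2k+1}|^p + |b_{2k+1}|^p)^{1/p} · r^{2k+1} ≤ r/√(1 − r⁴) ≤ 1. -/
/-!
For `0 ≤ r < 1` the function `t ↦ f (r e^{it})` is an absolutely convergent trigonometric series
with coefficient `a_k r^(2k+1)` at frequency `2k+1` and `conj b_k r^(2k+1)` at frequency
`-(2k+1)`, so Bessel's inequality and `|f| < 1` give `∑ (|a_k|² + |b_k|²) r^(4k+2) ≤ 1`; letting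
`r → 1`, `∑ (|a_k|² + |b_k|²) ≤ 1`. The power-mean inequality bounds `(|a_k|^p + |b_k|^p)^(1/p)`
by `2^(1/p - 1/2)` (by `1` if `p ≥ 2`) times `(|a_k|² + |b_k|²)^(1/2)`, and Cauchy–Schwarz against
`∑ r^(4k+2) = r² / (1 - r⁴)` then gives the bound with `r / √(1 - r⁴)`. With `c = 2^(2/p - 2)`
(resp. `c = 1/2`) the radius condition `r ≤ √(√(c² + 1) - c)` is `2c r² ≤ 1 - r⁴`, i.e.
`√(2c) r / √(1 - r⁴) ≤ 1`.
-/

open Filter Topology MeasureTheory AddCircle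
open scoped ComplexConjugate

theorem fourier_natCast_apply {T : ℝ} (n : ℕ) (t : AddCircle T) :
    fourier (n : ℤ) t = (toCircle t : ℂ) ^ n := by
  rw [fourier_apply, natCast_zsmul, toCircle_nsmul, Circle.coe_pow]

theorem sum_norm_sq_le_sq_of_norm_tsum_fourier_le {T : ℝ} [Fact (0 < T)] {ι : Type*}
    {c : ι → ℂ} {ν : ι → ℤ} (hν : Function.Injective ν) (hc : Summable fun i => ‖c i‖) {M : ℝ}
    (hM : ∀ t : AddCircle T, ‖∑' i, c i * fourier (ν i) t‖ ≤ M) (s : Finset ι) :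
    ∑ i ∈ s, ‖c i‖ ^ 2 ≤ M ^ 2 := by
  classical
  have hsum : Summable fun i => c i • fourier (T := T) (ν i) :=
    .of_norm_bounded hc fun i => by rw [norm_smul, fourier_norm, mul_one]
  set F := ∑' i, c i • fourier (T := T) (ν i)
  have hFM : ‖F‖ ≤ M := by
    refine (ContinuousMap.norm_le F ((norm_nonneg _).trans (hM 0))).2 fun t => ?_
    have := (hsum.hasSum.mapL (ContinuousMap.evalCLM ℂ t)).tsum_eq
    simp only [ContinuousMap.evalCLM_apply, ContinuousMap.smul_apply, smul_eq_mul] at this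
    exact this ▸ hM t
  set x := ContinuousMap.toLp 2 haarAddCircle ℂ F
  have hx : ‖x‖ ≤ M := by
    refine ((ContinuousMap.toLp 2 haarAddCircle ℂ).le_opNorm F).trans ?_
    refine (mul_le_of_le_one_left (norm_nonneg F) ?_).trans hFM
    refine (ContinuousMap.toLp_norm_le (𝕜 := ℂ) (p := 2) haarAddCircle).trans ?_
    simp [measureUnivNNReal]
  have hcoeff : ∀ i, inner ℂ (fourierLp 2 (ν i)) x = c i := by
    intro i
    refine (hsum.hasSum.mapL ((innerSL ℂ (fourierLp 2 (ν i))).comp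
      (ContinuousMap.toLp 2 haarAddCircle ℂ))).unique ?_
    refine (hasSum_ite_eq i (c i)).congr_fun fun j => ?_
    simp only [ContinuousLinearMap.comp_apply, innerSL_apply_apply, map_smul]
    change c j • inner ℂ ((fourierLp (T := T) 2 ∘ ν) i) ((fourierLp 2 ∘ ν) j) = _
    rw [orthonormal_iff_ite.1 ((orthonormal_fourier (T := T)).comp ν hν) i j]
    obtain rfl | hij := eq_or_ne i j
    · simp
    · simp [hij, hij.symm]
  calc ∑ i ∈ s, ‖c i‖ ^ 2 = ∑ i ∈ s, ‖inner ℂ (fourierLp 2 (ν i)) x‖ ^ 2 := by simp only [hcoeff]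
    _ ≤ ‖x‖ ^ 2 := ((orthonormal_fourier (T := T)).comp ν hν).sum_inner_products_le x
    _ ≤ M ^ 2 := by gcongr

theorem sum_sq_norm_mul_pow_le_sq {a b : ℕ → ℂ} {h g : ℂ → ℂ} {e : ℕ → ℕ}
    (he : Function.Injective e) (he0 : ∀ k, e k ≠ 0)
    (hh : ∀ z : ℂ, ‖z‖ < 1 → HasSum (fun k => a k * z ^ e k) (h z))
    (hg : ∀ z : ℂ, ‖z‖ < 1 → HasSum (fun k => b k * z ^ e k) (g z)) {M : ℝ}
    (hM : ∀ z : ℂ, ‖z‖ < 1 → ‖h z + conj (g z)‖ ≤ M) {r : ℝ} (hr0 : 0 ≤ r) (hr1 : r < 1)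
    (s : Finset ℕ) : ∑ k ∈ s, (‖a k‖ ^ 2 + ‖b k‖ ^ 2) * r ^ (2 * e k) ≤ M ^ 2 := by
  -- On the circle of radius `r` the frequencies `e k` and `-e k` are pairwise distinct since
  -- `e k ≠ 0`, so Bessel's inequality sees the coefficients of `h` and of `conj g` separately.
  let c : ℕ ⊕ ℕ → ℂ := Sum.elim (fun k => a k * r ^ e k) (fun k => conj (b k) * r ^ e k)
  let ν : ℕ ⊕ ℕ → ℤ := Sum.elim (fun k => e k) (fun k => -e k)
  have hν : Function.Injective ν := by
    rintro (i | i) (j | j) hij <;> simp only [ν, Sum.elim_inl, Sum.elim_inr] at hij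
    · exact congrArg _ (he (by exact_mod_cast hij))
    · have := he0 i; omega
    · have := he0 i; omega
    · exact congrArg _ (he (by exact_mod_cast neg_injective hij))
  have hrc : ‖(r : ℂ)‖ < 1 := by rwa [Complex.norm_real, Real.norm_of_nonneg hr0]
  have hc : Summable fun i => ‖c i‖ := by
    refine Summable.sum _ ?_ ?_
    · exact summable_norm_iff.2 (hh _ hrc).summable
    · simpa [c, Function.comp_def] using summable_norm_iff.2 (hg _ hrc).summable
  have hval : ∀ t : AddCircle (1 : ℝ), ∑' i, c i * fourier (ν i) t =
      h (r * toCircle t) + conj (g (r * toCircle t)) := by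
    intro t
    have hz : ‖(r : ℂ) * toCircle t‖ < 1 := by rwa [norm_mul, Circle.norm_coe, mul_one]
    refine (HasSum.sum ((hh _ hz).congr_fun fun k => ?_)
      ((hg _ hz).star.congr_fun fun k => ?_)).tsum_eq
    · simp only [Function.comp_apply, c, ν, Sum.elim_inl, fourier_natCast_apply]
      ring
    · simp only [Function.comp_apply, c, ν, Sum.elim_inr, fourier_neg, fourier_natCast_apply]
      simp only [star_mul', mul_pow, star_pow, Complex.star_def, map_pow, Complex.conj_ofReal]
      ring
  have hbessel := sum_norm_sq_le_sq_of_norm_tsum_fourier_le hν hc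
    (fun t => (hval t).symm ▸ hM _ (by rwa [norm_mul, Circle.norm_coe, mul_one])) (s.disjSum s)
  rw [Finset.sum_disjSum] at hbessel
  refine Eq.trans_le ?_ hbessel
  rw [← Finset.sum_add_distrib]
  refine Finset.sum_congr rfl fun k _ => ?_
  simp only [c, Sum.elim_inl, Sum.elim_inr, norm_mul, norm_pow, Complex.norm_real,
    Real.norm_of_nonneg hr0, Complex.norm_conj]
  ring

theorem summable_and_tsum_sq_norm_le_sq {a b : ℕ → ℂ} {h g : ℂ → ℂ} {e : ℕ → ℕ}
    (he : Function.Injective e) (he0 : ∀ k, e k ≠ 0)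
    (hh : ∀ z : ℂ, ‖z‖ < 1 → HasSum (fun k => a k * z ^ e k) (h z))
    (hg : ∀ z : ℂ, ‖z‖ < 1 → HasSum (fun k => b k * z ^ e k) (g z)) {M : ℝ}
    (hM : ∀ z : ℂ, ‖z‖ < 1 → ‖h z + conj (g z)‖ ≤ M) :
    Summable (fun k => ‖a k‖ ^ 2 + ‖b k‖ ^ 2) ∧ ∑' k, (‖a k‖ ^ 2 + ‖b k‖ ^ 2) ≤ M ^ 2 := by
  have hfin : ∀ s : Finset ℕ, ∑ k ∈ s, (‖a k‖ ^ 2 + ‖b k‖ ^ 2) ≤ M ^ 2 := fun s => by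
    have hlim : Tendsto (fun r : ℝ => ∑ k ∈ s, (‖a k‖ ^ 2 + ‖b k‖ ^ 2) * r ^ (2 * e k))
        (𝓝[<] 1) (𝓝 (∑ k ∈ s, (‖a k‖ ^ 2 + ‖b k‖ ^ 2))) := by
      have hcont : Continuous fun r : ℝ => ∑ k ∈ s, (‖a k‖ ^ 2 + ‖b k‖ ^ 2) * r ^ (2 * e k) := by
        fun_prop
      simpa using (hcont.tendsto 1).mono_left nhdsWithin_le_nhds
    refine le_of_tendsto hlim ?_
    filter_upwards [Ioo_mem_nhdsLT one_pos] with r hr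
    exact sum_sq_norm_mul_pow_le_sq he he0 hh hg hM hr.1.le hr.2 s
  exact ⟨summable_of_sum_le (fun k => by positivity) hfin,
    tsum_le_of_sum_le' (sq_nonneg M) hfin⟩

theorem NNReal.rpow_add_rpow_le_mul_rpow_add_rpow (u v : NNReal) {p q : ℝ} (hp : 0 < p)
    (hpq : p ≤ q) :
    (u ^ p + v ^ p) ^ (1 / p) ≤ (2 : NNReal) ^ (1 / p - 1 / q) * (u ^ q + v ^ q) ^ (1 / q) := by
  have hq : 0 < q := hp.trans_le hpq
  have hpow : ∀ w : NNReal, (w ^ p) ^ (q / p) = w ^ q := fun w => by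
    rw [← NNReal.rpow_mul, mul_div_cancel₀ _ hp.ne']
  have key := NNReal.rpow_add_le_mul_rpow_add_rpow (u ^ p) (v ^ p) ((one_le_div hp).2 hpq)
  rw [hpow, hpow] at key
  have := NNReal.rpow_le_rpow key (one_div_nonneg.2 hq.le)
  rwa [← NNReal.rpow_mul, NNReal.mul_rpow, ← NNReal.rpow_mul,
    show q / p * (1 / q) = 1 / p by field_simp,
    show (q / p - 1) * (1 / q) = 1 / p - 1 / q by field_simp] at this

theorem Real.rpow_add_rpow_le_mul_rpow_add_rpow {x y : ℝ} (hx : 0 ≤ x) (hy : 0 ≤ y) {p q : ℝ}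
    (hp : 0 < p) (hpq : p ≤ q) :
    (x ^ p + y ^ p) ^ (1 / p) ≤ (2 : ℝ) ^ (1 / p - 1 / q) * (x ^ q + y ^ q) ^ (1 / q) := by
  lift x to NNReal using hx
  lift y to NNReal using hy
  exact_mod_cast NNReal.rpow_add_rpow_le_mul_rpow_add_rpow x y hp hpq

theorem tsum_sqrt_mul_pow_odd_le {A : ℕ → ℝ} (hA0 : ∀ k, 0 ≤ A k) (hA : Summable A) {r : ℝ}
    (hr0 : 0 ≤ r) (hr1 : r < 1) :
    Summable (fun k => √(A k) * r ^ (2 * k + 1)) ∧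
      ∑' k, √(A k) * r ^ (2 * k + 1) ≤ √(∑' k, A k) * (r / √(1 - r ^ 4)) := by
  have hr4 : r ^ 4 < 1 := pow_lt_one₀ hr0 hr1 (by norm_num)
  have hgeom : HasSum (fun k : ℕ => (r ^ (2 * k + 1)) ^ (2 : ℝ)) (r ^ 2 / (1 - r ^ 4)) := by
    rw [div_eq_mul_inv]
    refine ((hasSum_geometric_of_lt_one (by positivity) hr4).mul_left (r ^ 2)).congr_fun
      fun k => ?_
    rw [Real.rpow_two, ← pow_mul, ← pow_mul, ← pow_add]
    ring_nf
  have hsq : (fun k => √(A k) ^ (2 : ℝ)) = A := funext fun k => by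
    rw [Real.rpow_two, Real.sq_sqrt (hA0 k)]
  obtain ⟨hsum, hle⟩ := Real.summable_and_inner_le_Lp_mul_Lq_tsum_of_nonneg
    Real.HolderConjugate.two_two (fun k => Real.sqrt_nonneg (A k)) (fun k => by positivity)
    (by rwa [hsq]) hgeom.summable
  refine ⟨hsum, hle.trans_eq ?_⟩
  rw [hsq, hgeom.tsum_eq, ← Real.sqrt_eq_rpow, ← Real.sqrt_eq_rpow,
    Real.sqrt_div' _ (sub_nonneg.2 hr4.le), Real.sqrt_sq hr0]

theorem tsum_mul_pow_odd_le {A u : ℕ → ℝ} (hA0 : ∀ k, 0 ≤ A k) (hA : Summable A)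
    (hA1 : ∑' k, A k ≤ 1) {C : ℝ} (hC : 0 ≤ C) (hu0 : ∀ k, 0 ≤ u k)
    (hu : ∀ k, u k ≤ C * √(A k)) {r : ℝ} (hr0 : 0 ≤ r) (hr1 : r < 1) :
    ∑' k, u k * r ^ (2 * k + 1) ≤ C * (r / √(1 - r ^ 4)) := by
  obtain ⟨hsum, hle⟩ := tsum_sqrt_mul_pow_odd_le hA0 hA hr0 hr1
  have hterm : ∀ k, u k * r ^ (2 * k + 1) ≤ C * (√(A k) * r ^ (2 * k + 1)) := fun k => by
    rw [← mul_assoc]; exact mul_le_mul_of_nonneg_right (hu k) (by positivity)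
  calc ∑' k, u k * r ^ (2 * k + 1)
      ≤ ∑' k, C * (√(A k) * r ^ (2 * k + 1)) :=
        Summable.tsum_le_tsum hterm
          (.of_nonneg_of_le (fun k => by positivity [hu0 k]) hterm (hsum.mul_left C))
          (hsum.mul_left C)
    _ = C * ∑' k, √(A k) * r ^ (2 * k + 1) := tsum_mul_left
    _ ≤ C * (√(∑' k, A k) * (r / √(1 - r ^ 4))) := by gcongr
    _ ≤ C * (r / √(1 - r ^ 4)) := by
        gcongr
        exact mul_le_of_le_one_left (by positivity) (Real.sqrt_le_one.2 hA1)

theorem lt_one_of_le_sqrt_sqrt_sq_add_one_sub {c r : ℝ} (hc : 0 < c)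
    (hr : r ≤ √(√(c ^ 2 + 1) - c)) : r < 1 := by
  refine hr.trans_lt ((Real.sqrt_lt' one_pos).2 ?_)
  have : √(c ^ 2 + 1) < c + 1 :=
    (Real.sqrt_lt' (by linarith)).2 (by nlinarith)
  linarith

theorem sqrt_two_mul_mul_div_sqrt_le_one {c r : ℝ} (hc : 0 ≤ c) (hr0 : 0 ≤ r)
    (hr : r ≤ √(√(c ^ 2 + 1) - c)) : √(2 * c) * (r / √(1 - r ^ 4)) ≤ 1 := by
  have hr2 : r ^ 2 + c ≤ √(c ^ 2 + 1) := by
    have := (Real.le_sqrt hr0 (sub_nonneg.2 (Real.le_sqrt_of_sq_le (by linarith)))).1 hr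
    linarith
  have hkey : 2 * c * r ^ 2 ≤ 1 - r ^ 4 := by
    have := Real.sq_sqrt (show 0 ≤ c ^ 2 + 1 by positivity)
    nlinarith [pow_le_pow_left₀ (by positivity) hr2 2]
  rw [← mul_div_assoc]
  refine div_le_one_of_le₀ ?_ (Real.sqrt_nonneg _)
  calc √(2 * c) * r = √(2 * c * r ^ 2) := by rw [Real.sqrt_mul' _ (sq_nonneg r), Real.sqrt_sq hr0]
    _ ≤ √(1 - r ^ 4) := Real.sqrt_le_sqrt hkey


theorem tsum_mul_pow_odd_le_of_le_sqrt_sqrt_sq_add_one_sub {A u : ℕ → ℝ} (hA0 : ∀ k, 0 ≤ A k)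
    (hA : Summable A) (hA1 : ∑' k, A k ≤ 1) (hu0 : ∀ k, 0 ≤ u k) {c : ℝ} (hc : 0 < c)
    (hu : ∀ k, u k ≤ √(2 * c) * √(A k)) {r : ℝ} (hr0 : 0 ≤ r) (hr : r ≤ √(√(c ^ 2 + 1) - c)) :
    ∑' k, u k * r ^ (2 * k + 1) ≤ √(2 * c) * (r / √(1 - r ^ 4)) ∧
      √(2 * c) * (r / √(1 - r ^ 4)) ≤ 1 :=
  ⟨tsum_mul_pow_odd_le hA0 hA hA1 (Real.sqrt_nonneg _) hu0 hu hr0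
      (lt_one_of_le_sqrt_sqrt_sq_add_one_sub hc hr),
    sqrt_two_mul_mul_div_sqrt_le_one hc.le hr0 hr⟩

/-- Theorem 4 of Kayumov–Ponnusamy: `p`-Bohr-type inequalities for odd bounded
harmonic functions `f = h + conj g` on the unit disk. -/
theorem odd_harmonic_p_bohr
    (a b : ℕ → ℂ) (h g : ℂ → ℂ)
    (hh : ∀ z : ℂ, ‖z‖ < 1 → HasSum (fun k : ℕ => a k * z ^ (2 * k + 1)) (h z))
    (hg : ∀ z : ℂ, ‖z‖ < 1 → HasSum (fun k : ℕ => b k * z ^ (2 * k + 1)) (g z))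
    (hbound : ∀ z : ℂ, ‖z‖ < 1 → ‖h z + (starRingEnd ℂ) (g z)‖ < 1) :
    (∀ p : ℝ, 1 ≤ p → p ≤ 2 → ∀ r : ℝ, 0 ≤ r →
      r ≤ Real.sqrt (Real.sqrt ((4 : ℝ) ^ (2 / p - 2) + 1) - (2 : ℝ) ^ (2 / p - 2)) →
      (∑' k : ℕ, (‖a k‖ ^ p + ‖b k‖ ^ p) ^ (1 / p) * r ^ (2 * k + 1))
          ≤ (2 : ℝ) ^ (1 / p - 1 / 2) * (r / Real.sqrt (1 - r ^ 4)) ∧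
        (2 : ℝ) ^ (1 / p - 1 / 2) * (r / Real.sqrt (1 - r ^ 4)) ≤ 1) ∧
    (∀ p : ℝ, 2 ≤ p → ∀ r : ℝ, 0 ≤ r →
      r ≤ Real.sqrt ((Real.sqrt 5 - 1) / 2) →
      (∑' k : ℕ, (‖a k‖ ^ p + ‖b k‖ ^ p) ^ (1 / p) * r ^ (2 * k + 1))
          ≤ r / Real.sqrt (1 - r ^ 4) ∧
        r / Real.sqrt (1 - r ^ 4) ≤ 1) := by
  obtain ⟨hA, hA1⟩ := summable_and_tsum_sq_norm_le_sq (e := fun k => 2 * k + 1)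
    (fun _ _ hk => by simp only at hk; omega) (fun _ => by omega) hh hg fun z hz => (hbound z hz).le
  rw [one_pow] at hA1
  have hA0 : ∀ k, 0 ≤ ‖a k‖ ^ 2 + ‖b k‖ ^ 2 := fun k => by positivity
  have hl2 : ∀ x y : ℝ, (x ^ (2 : ℝ) + y ^ (2 : ℝ)) ^ (1 / 2 : ℝ) = √(x ^ 2 + y ^ 2) := by
    simp [Real.sqrt_eq_rpow]
  refine ⟨fun p hp1 hp2 r hr0 hr => ?_, fun p hp2 r hr0 hr => ?_⟩
  · have h4 : (4 : ℝ) ^ (2 / p - 2) = ((2 : ℝ) ^ (2 / p - 2)) ^ 2 := by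
      rw [show (4 : ℝ) = 2 * 2 by norm_num, Real.mul_rpow zero_le_two zero_le_two, sq]
    have hC : (2 : ℝ) ^ (1 / p - 1 / 2) = √(2 * 2 ^ (2 / p - 2)) := by
      rw [Real.sqrt_eq_rpow, mul_comm, ← Real.rpow_add_one two_ne_zero, ← Real.rpow_mul zero_le_two]
      ring_nf
    rw [h4] at hr
    rw [hC]
    refine tsum_mul_pow_odd_le_of_le_sqrt_sqrt_sq_add_one_sub hA0 hA hA1 (fun k => by positivity)
      (by positivity) (fun k => ?_) hr0 hr
    rw [← hC, ← hl2]
    exact Real.rpow_add_rpow_le_mul_rpow_add_rpow (norm_nonneg _) (norm_nonneg _) (by linarith) hp2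
  · have h5 : (√5 - 1) / 2 = √((1 / 2) ^ 2 + 1) - 1 / 2 := by
      rw [show (1 / 2 : ℝ) ^ 2 + 1 = (√5 / 2) ^ 2 by
        rw [div_pow (√5), Real.sq_sqrt (by norm_num)]; norm_num, Real.sqrt_sq (by positivity)]
      ring
    have hone : √(2 * (1 / 2)) = (1 : ℝ) := by norm_num
    rw [h5] at hr
    simpa only [hone, one_mul] using tsum_mul_pow_odd_le_of_le_sqrt_sqrt_sq_add_one_sub hA0 hA hA1
      (fun k => by positivity) (by norm_num) (fun k => by
        rw [hone, one_mul, ← hl2]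
        exact Real.rpow_add_rpow_le (norm_nonneg _) (norm_nonneg _) two_pos hp2) hr0 hr
end
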